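/- arXiv:1910.04096 — 6 statements merged into one kernel-verified Lean document; each statement's English description precedes it below -/
import Mathlib

section
/- Let n, q be positive integers with q ≤ n, let B be a real n×q matrix of full column rank q, and let L be a real matrix with n columns such that L·B = 0. Then every real n×q matrix K satisfying B·Kᵀ + K·Bᵀ = 0 also satisfies L·K = 0. Consequently, appending the rows of (I_q ⊗ L) to any matrix whose rows contain the rows representing the linear map K ↦ B·Kᵀ + K·Bᵀ does not increase the rank. -/
open Matrix

lemma mul_eq_zero_of_rank_full {n q : ℕ} (B : Matrix (Fin n) (Fin q) ℝ)
    (hB : B.rank = q) {p : Type*} [Fintype p] (M : Matrix (Fin q) p ℝ)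
    (h : B * M = 0) : M = 0 := by
  -- mulVecLin B is injective
  have hinj : LinearMap.ker B.mulVecLin = ⊥ := by
    have h1 := LinearMap.finrank_range_add_finrank_ker B.mulVecLin
    rw [Matrix.rank] at hB
    rw [hB] at h1
    simp only [Module.finrank_fintype_fun_eq_card, Fintype.card_fin] at h1
    have : Module.finrank ℝ (LinearMap.ker B.mulVecLin) = 0 := by omega
    exact Submodule.finrank_eq_zero.mp this
  ext i j
  have : B.mulVecLin (fun l => M l j) = 0 := by
    ext r
    have := congrFun (congrFun h r) j
    simpa [Matrix.mulVecLin_apply, Matrix.mulVec, Matrix.mul_apply, dotProduct] using this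
  have : (fun l => M l j) ∈ LinearMap.ker B.mulVecLin := this
  rw [hinj] at this
  simpa using congrFun this i

/-- If `B` has full column rank and `L·B = 0`, then every `K` with
`B·Kᵀ + K·Bᵀ = 0` satisfies `L·K = 0`; consequently appending the map `K ↦ L·K`
to any linear map `Φ` whose kernel is contained in `{K | B·Kᵀ + K·Bᵀ = 0}`
does not increase the rank. -/
theorem stmt_2 (n q k : ℕ) (hn : 0 < n) (hq : 0 < q) (hqn : q ≤ n)
    (B : Matrix (Fin n) (Fin q) ℝ) (hB : B.rank = q)
    (L : Matrix (Fin k) (Fin n) ℝ) (hLB : L * B = 0) :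
    (∀ K : Matrix (Fin n) (Fin q) ℝ, B * Kᵀ + K * Bᵀ = 0 → L * K = 0) ∧
    (∀ (V : Type) (_ : AddCommGroup V) (_ : Module ℝ V)
      (Φ : Matrix (Fin n) (Fin q) ℝ →ₗ[ℝ] V)
      (Ψ : Matrix (Fin n) (Fin q) ℝ →ₗ[ℝ] Matrix (Fin k) (Fin q) ℝ),
      (∀ K, Ψ K = L * K) →
      (∀ K, Φ K = 0 → B * Kᵀ + K * Bᵀ = 0) →
      LinearMap.rank (Φ.prod Ψ) ≤ LinearMap.rank Φ) := by
  have key : ∀ K : Matrix (Fin n) (Fin q) ℝ, B * Kᵀ + K * Bᵀ = 0 → L * K = 0 := by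
    intro K hK
    have h1 : L * (B * Kᵀ + K * Bᵀ) = 0 := by rw [hK, Matrix.mul_zero]
    have h2 : L * K * Bᵀ = 0 := by
      have : L * B * Kᵀ + L * K * Bᵀ = 0 := by
        simpa [Matrix.mul_add, Matrix.mul_assoc] using h1
      rwa [hLB, Matrix.zero_mul, zero_add] at this
    have h3 : B * (L * K)ᵀ = 0 := by
      have := congrArg Matrix.transpose h2
      simpa [Matrix.transpose_mul] using this
    have h4 : (L * K)ᵀ = 0 := mul_eq_zero_of_rank_full B hB _ h3
    have := congrArg Matrix.transpose h4
    simpa using this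
  refine ⟨key, ?_⟩
  intro V _ _ Φ Ψ hΨ hker
  have hkerle : LinearMap.ker Φ ≤ LinearMap.ker Ψ := by
    intro K hK
    simp only [LinearMap.mem_ker] at *
    rw [hΨ]
    exact key K (hker K hK)
  have hkereq : LinearMap.ker (Φ.prod Ψ) = LinearMap.ker Φ := by
    rw [LinearMap.ker_prod]
    exact inf_eq_left.mpr hkerle
  -- use rank-nullity over finite dimensional domain
  have h1 := LinearMap.finrank_range_add_finrank_ker (Φ.prod Ψ)
  have h2 := LinearMap.finrank_range_add_finrank_ker Φ
  rw [hkereq] at h1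
  have hfr : Module.finrank ℝ (LinearMap.range (Φ.prod Ψ)) =
      Module.finrank ℝ (LinearMap.range Φ) := by omega
  have e1 : LinearMap.rank (Φ.prod Ψ) =
      (Module.finrank ℝ (LinearMap.range (Φ.prod Ψ)) : Cardinal) :=
    (Module.finrank_eq_rank ℝ _).symm
  have e2 : LinearMap.rank Φ = (Module.finrank ℝ (LinearMap.range Φ) : Cardinal) :=
    (Module.finrank_eq_rank ℝ _).symm
  rw [e1, e2, hfr]
end

section
/- Let n, q be positive integers with q ≤ n and let B be a real n×q matrix of full column rank q. Then the kernel of the linear map K ↦ B·Kᵀ + K·Bᵀ from real n×q matrices to real n×n matrices equals {B·S : S a real q×q skew-symmetric matrix}, and this kernel has dimension q(q−1)/2 over ℝ. -/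
/-!
Having full column rank, `B` has a left inverse `L`. Multiplying `B Kᵀ + K Bᵀ = 0` on the left by
`L` gives `K = B S` with `S = -(L K)ᵀ`, and then `L (B (Sᵀ + S) Bᵀ) Lᵀ = Sᵀ + S = 0`. As `S ↦ B S`
is injective, the kernel is isomorphic to the skew-symmetric `q × q` matrices, which are
coordinatised by their entries strictly below the diagonal.
-/

open Matrix LieAlgebra.Orthogonal

-- `so` lives in matrices with their commutator Lie ring structure.
attribute [local instance] LieRing.ofAssociativeRing

namespace Matrix

variable {l m n R : Type*}

theorem exists_mul_eq_one_of_rank_eq_card {K : Type*} [Field K] [Fintype m] [Fintype n]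
    [DecidableEq n] (B : Matrix m n K) (hB : B.rank = Fintype.card n) :
    ∃ L : Matrix n m K, L * B = 1 := by
  classical
  have hker : LinearMap.ker B.mulVecLin = ⊥ := by
    have := B.mulVecLin.finrank_range_add_finrank_ker
    rw [Module.finrank_fintype_fun_eq_card, ← rank, hB] at this
    exact Submodule.finrank_eq_zero.mp (by omega)
  obtain ⟨g, hg⟩ := B.mulVecLin.exists_leftInverse_of_injective hker
  refine ⟨LinearMap.toMatrix' g, toLin'.injective ?_⟩
  rw [toLin'_mul, toLin'_toMatrix', toLin'_one, ← hg]
  rfl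

section CommRing

variable [CommRing R] [Fintype m] [Fintype n] [DecidableEq n]
  {B : Matrix m n R} {L : Matrix n m R}

theorem mul_right_injective_of_mul_eq_one (hL : L * B = 1) :
    Function.Injective (B * · : Matrix n l R → Matrix m l R) := fun S T h => by
  simpa [← Matrix.mul_assoc, hL] using congrArg (L * ·) h

theorem mul_transpose_add_mul_transpose_eq_zero_iff (hL : L * B = 1)
    (K : Matrix m n R) : B * Kᵀ + K * Bᵀ = 0 ↔ ∃ S : Matrix n n R, Sᵀ = -S ∧ K = B * S := by
  have hLB : Bᵀ * Lᵀ = 1 := by rw [← transpose_mul, hL, transpose_one]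
  constructor
  · intro h
    set S := -(L * K)ᵀ
    have hK : K = B * S := by
      have := congrArg (L * ·) h
      simp only [Matrix.mul_add, ← Matrix.mul_assoc, hL, Matrix.one_mul, Matrix.mul_zero] at this
      have := congrArg transpose (eq_neg_of_add_eq_zero_left this)
      simpa [S, Matrix.transpose_mul, Matrix.mul_neg] using this
    refine ⟨S, ?_, hK⟩
    have := congrArg (fun M => L * M * Lᵀ) h
    simp only [hK, transpose_mul, ← Matrix.mul_assoc, hL, Matrix.one_mul, Matrix.mul_add,
      Matrix.add_mul] at this
    simp only [Matrix.mul_assoc, hLB, Matrix.mul_one, Matrix.mul_zero, Matrix.zero_mul] at this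
    exact eq_neg_of_add_eq_zero_left this
  · rintro ⟨S, hS, rfl⟩
    simp [transpose_mul, hS, Matrix.mul_assoc]

end CommRing

end Matrix

namespace LieAlgebra.Orthogonal

variable {ι R : Type*} [LinearOrder ι] [Fintype ι] [CommRing R]

def ofStrictLower (f : {p : ι × ι // p.2 < p.1} → R) : Matrix ι ι R :=
  of fun i j => if h : j < i then f ⟨(i, j), h⟩ else 0

theorem sub_transpose_ofStrictLower_mem_so (f : {p : ι × ι // p.2 < p.1} → R) :
    ofStrictLower f - (ofStrictLower f)ᵀ ∈ so ι R := by
  rw [mem_so, transpose_sub, transpose_transpose, neg_sub]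

variable [IsDomain R]

def soEquivStrictLower (hR : ringChar R ≠ 2) :
    so ι R ≃ₗ[R] ({p : ι × ι // p.2 < p.1} → R) where
  toFun S p := S.1 p.1.1 p.1.2
  map_add' _ _ := rfl
  map_smul' _ _ := rfl
  invFun f := ⟨_, sub_transpose_ofStrictLower_mem_so f⟩
  left_inv S := by
    have hS : ∀ i j, S.1 j i = -S.1 i j := fun i j => by
      simpa using congrFun₂ ((mem_so _ _ _).mp S.2) i j
    ext i j
    simp only [ofStrictLower, Matrix.sub_apply, transpose_apply, of_apply]
    rcases lt_trichotomy i j with h | rfl | h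
    · simp [h, h.not_gt, hS i j]
    · simpa using ((Ring.eq_self_iff_eq_zero_of_char_ne_two hR).mp (hS i i).symm).symm
    · simp [h, h.not_gt]
  right_inv f := by
    ext ⟨⟨i, j⟩, h⟩
    simp [ofStrictLower, h, h.not_gt]

theorem finrank_so_fin (hR : ringChar R ≠ 2) (q : ℕ) :
    Module.finrank R (so (Fin q) R) = q * (q - 1) / 2 := by
  rw [(soEquivStrictLower hR).finrank_eq, Module.finrank_fintype_fun_eq_card,
    Fintype.card_congr (Equiv.subtypeProdEquivSigmaSubtype fun i j : Fin q => j < i),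
    Fintype.card_sigma]
  simp only [Fintype.card_subtype, Finset.filter_gt_eq_Iio, Fin.card_Iio]
  rw [Fin.sum_univ_eq_sum_range (fun i => i) q, Finset.sum_range_id]

end LieAlgebra.Orthogonal

theorem stmt_3_general (n q : ℕ)
    (B : Matrix (Fin n) (Fin q) ℝ) (hB : B.rank = q)
    (Φ : Matrix (Fin n) (Fin q) ℝ →ₗ[ℝ] Matrix (Fin n) (Fin n) ℝ)
    (hΦ : ∀ K, Φ K = B * Kᵀ + K * Bᵀ) :
    ((LinearMap.ker Φ : Set (Matrix (Fin n) (Fin q) ℝ)) =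
      {M | ∃ S : Matrix (Fin q) (Fin q) ℝ, Sᵀ = -S ∧ M = B * S}) ∧
    Module.finrank ℝ (LinearMap.ker Φ) = q * (q - 1) / 2 := by
  obtain ⟨L, hL⟩ := B.exists_mul_eq_one_of_rank_eq_card (by rwa [Fintype.card_fin])
  have mem_ker (K) :
      K ∈ LinearMap.ker Φ ↔ ∃ S : Matrix (Fin q) (Fin q) ℝ, Sᵀ = -S ∧ K = B * S := by
    rw [LinearMap.mem_ker, hΦ, mul_transpose_add_mul_transpose_eq_zero_iff hL]
  refine ⟨Set.ext mem_ker, ?_⟩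
  have ker_eq :
      LinearMap.ker Φ = (so (Fin q) ℝ).toSubmodule.map (mulLeftLinearMap (Fin q) ℝ B) := by
    ext K
    simp [mem_ker, mem_so, eq_comm]
  rw [ker_eq,
    ← (Submodule.equivMapOfInjective _ (mul_right_injective_of_mul_eq_one hL) _).finrank_eq]
  exact finrank_so_fin (by simp [ringChar.eq_zero]) q

/-- For `B` of full column rank, the kernel of `K ↦ B·Kᵀ + K·Bᵀ`
equals `{B·S : S skew-symmetric}` and has dimension `q(q-1)/2`. -/
theorem stmt_3 (n q : ℕ) (hn : 0 < n) (hq : 0 < q) (hqn : q ≤ n)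
    (B : Matrix (Fin n) (Fin q) ℝ) (hB : B.rank = q)
    (Φ : Matrix (Fin n) (Fin q) ℝ →ₗ[ℝ] Matrix (Fin n) (Fin n) ℝ)
    (hΦ : ∀ K, Φ K = B * Kᵀ + K * Bᵀ) :
    ((LinearMap.ker Φ : Set (Matrix (Fin n) (Fin q) ℝ)) =
      {M | ∃ S : Matrix (Fin q) (Fin q) ℝ, Sᵀ = -S ∧ M = B * S}) ∧
    Module.finrank ℝ (LinearMap.ker Φ) = q * (q - 1) / 2 :=
  stmt_3_general n q B hB Φ hΦ
end

section
/- Let n, q, r be positive integers with q < n, let A₀ be an invertible real n×n matrix, B a real n×q matrix of full column rank, Σ = A₀⁻¹BBᵀ(A₀⁻¹)ᵀ, and let R : ℝ^{n×n} × ℝ^{n×q} → ℝ^r be a linear map (the researcher-imposed affine restrictions). If the linear map (H, K) ↦ ( −A₀⁻¹HΣ − ΣHᵀ(A₀⁻¹)ᵀ + A₀⁻¹(KBᵀ + BKᵀ)(A₀⁻¹)ᵀ , R(H, K) ) is injective, then there is a neighborhood U of (A₀, B) in ℝ^{n×n} × ℝ^{n×q} such that every pair (Ã₀, B̃) ∈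 U with Ã₀ invertible, Ã₀⁻¹B̃B̃ᵀ(Ã₀⁻¹)ᵀ = Σ, and R(Ã₀, B̃) = R(A₀, B) satisfies (Ã₀, B̃) = (A₀, B). -/
/-!
Multiplying the covariance equation on the left by `A` and on the right by `Aᵀ` replaces the
rational map `(A, B) ↦ A⁻¹BBᵀA⁻ᵀ` by the quadratic gap `A Σ Aᵀ - B Bᵀ`, which vanishes at every
solution. Up to the invertible conjugation `M ↦ -A₀⁻¹ M A₀⁻ᵀ`, the Jacobian in the hypothesis is
the derivative at `(A₀, B)` of `(A, B) ↦ (A Σ Aᵀ - B Bᵀ, R (A, B))`. An injective strict derivative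
into a finite-dimensional space has a continuous left inverse `P`, and the inverse function theorem
applied to `P ∘ f` makes `f` injective near the base point; all solutions near `(A₀, B)` have the
same image `(0, R (A₀, B))`, hence coincide with `(A₀, B)`.
-/

open Matrix Function Topology

section Differentiability

variable {𝕜 : Type*} [NontriviallyNormedField 𝕜]
  {E F : Type*} [NormedAddCommGroup E] [NormedSpace 𝕜 E] [NormedAddCommGroup F] [NormedSpace 𝕜 F]

theorem HasStrictFDerivAt.exists_mem_nhds_injOn [CompleteSpace 𝕜] [FiniteDimensional 𝕜 F]
    {f : E → F} {f' : E →L[𝕜] F} {a : E} (hf : HasStrictFDerivAt f f' a)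
    (hf' : Injective f') : ∃ U ∈ 𝓝 a, Set.InjOn f U := by
  have : FiniteDimensional 𝕜 E := Module.Finite.of_injective (f' : E →ₗ[𝕜] F) hf'
  have : CompleteSpace E := FiniteDimensional.complete 𝕜 E
  obtain ⟨P, hP⟩ := (f' : E →ₗ[𝕜] F).exists_leftInverse_of_injective
    (LinearMap.ker_eq_bot.mpr hf')
  have hPf : HasStrictFDerivAt (LinearMap.toContinuousLinearMap P ∘ f)
      (ContinuousLinearEquiv.refl 𝕜 E : E →L[𝕜] E) a :=
    ((LinearMap.toContinuousLinearMap P).hasStrictFDerivAt.comp a hf).congr_fderiv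
      (ContinuousLinearMap.ext (LinearMap.congr_fun hP))
  exact ⟨_, hPf.toOpenPartialHomeomorph.open_source.mem_nhds
      hPf.mem_toOpenPartialHomeomorph_source,
    Set.InjOn.of_comp (g := LinearMap.toContinuousLinearMap P) hPf.toOpenPartialHomeomorph.injOn⟩

theorem ContinuousLinearMap.hasStrictFDerivAt_apply_self (b : E →L[𝕜] E →L[𝕜] F) (a : E) :
    HasStrictFDerivAt (fun x => b x x) (b a + b.flip a) a :=
  b.hasStrictFDerivAt_of_bilinear (hasStrictFDerivAt_id a) (hasStrictFDerivAt_id a)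

end Differentiability

section Covariance

variable {m k : Type*} [Fintype m] [Fintype k]

noncomputable def covarianceGap (S : Matrix m m ℝ) :
    (Matrix m m ℝ × Matrix m k ℝ) →L[ℝ] (Matrix m m ℝ × Matrix m k ℝ) →L[ℝ] Matrix m m ℝ :=
  (LinearMap.mk₂ ℝ (fun x y => x.1 * S * y.1ᵀ - x.2 * y.2ᵀ)
    (fun _ _ _ => by simp only [Prod.fst_add, Prod.snd_add, Matrix.add_mul]; abel)
    (fun _ _ _ => by simp only [Prod.smul_fst, Prod.smul_snd, smul_mul, smul_sub])
    (fun _ _ _ => by simp only [Prod.fst_add, Prod.snd_add, transpose_add, Matrix.mul_add]; abel)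
    (fun _ _ _ => by
      simp only [Prod.smul_fst, Prod.smul_snd, transpose_smul, Matrix.mul_smul, smul_sub]))
    |>.toContinuousBilinearMap

@[simp]
theorem covarianceGap_apply (S : Matrix m m ℝ) (x y : Matrix m m ℝ × Matrix m k ℝ) :
    covarianceGap S x y = x.1 * S * y.1ᵀ - x.2 * y.2ᵀ :=
  rfl

variable [DecidableEq m]

theorem covarianceGap_self_eq_zero {S A : Matrix m m ℝ} {B : Matrix m k ℝ} (hA : IsUnit A.det)
    (hS : A⁻¹ * B * Bᵀ * A⁻¹ᵀ = S) : covarianceGap S (A, B) (A, B) = 0 := by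
  rw [covarianceGap_apply, sub_eq_zero, ← hS]
  simp only [Matrix.mul_assoc, ← transpose_mul, mul_nonsing_inv_cancel_left _ _ hA]

theorem neg_conj_covarianceGap_deriv {S A : Matrix m m ℝ} (B : Matrix m k ℝ) (hA : IsUnit A.det)
    (H : Matrix m m ℝ) (K : Matrix m k ℝ) :
    -(A⁻¹ * (covarianceGap S (A, B) (H, K) + covarianceGap S (H, K) (A, B)) * A⁻¹ᵀ) =
      -(A⁻¹ * H * S) - S * Hᵀ * A⁻¹ᵀ + A⁻¹ * (K * Bᵀ + B * Kᵀ) * A⁻¹ᵀ := by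
  simp only [covarianceGap_apply, Matrix.mul_add, Matrix.add_mul, Matrix.mul_sub, Matrix.sub_mul,
    Matrix.mul_assoc, ← transpose_mul, nonsing_inv_mul_cancel_left _ _ hA, nonsing_inv_mul _ hA,
    transpose_one, mul_one]
  abel

end Covariance

section LocalIdentifiability

attribute [local instance] Matrix.normedAddCommGroup Matrix.normedSpace

theorem exists_mem_nhds_injOn_covarianceGap_prod {m k V : Type*} [Fintype m] [Fintype k]
    [NormedAddCommGroup V] [NormedSpace ℝ V] [FiniteDimensional ℝ V] (S : Matrix m m ℝ)
    (R : (Matrix m m ℝ × Matrix m k ℝ) →ₗ[ℝ] V) (a : Matrix m m ℝ × Matrix m k ℝ)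
    (ha : Injective fun x => (covarianceGap S a x + covarianceGap S x a, R x)) :
    ∃ U ∈ 𝓝 a, Set.InjOn (fun x => (covarianceGap S x x, R x)) U :=
  ((covarianceGap S).hasStrictFDerivAt_apply_self a).prodMk
    (LinearMap.toContinuousLinearMap R).hasStrictFDerivAt |>.exists_mem_nhds_injOn ha

end LocalIdentifiability

theorem stmt_4_general (n q r : ℕ)
    (A₀ : Matrix (Fin n) (Fin n) ℝ) (hA₀ : IsUnit A₀.det)
    (B : Matrix (Fin n) (Fin q) ℝ)
    (Sig : Matrix (Fin n) (Fin n) ℝ) (hSig : Sig = A₀⁻¹ * B * Bᵀ * (A₀⁻¹)ᵀ)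
    (R : (Matrix (Fin n) (Fin n) ℝ × Matrix (Fin n) (Fin q) ℝ) →ₗ[ℝ] (Fin r → ℝ))
    (J : (Matrix (Fin n) (Fin n) ℝ × Matrix (Fin n) (Fin q) ℝ) →ₗ[ℝ]
      (Matrix (Fin n) (Fin n) ℝ × (Fin r → ℝ)))
    (hJ : ∀ H K, J (H, K) =
      (-(A₀⁻¹ * H * Sig) - Sig * Hᵀ * (A₀⁻¹)ᵀ + A₀⁻¹ * (K * Bᵀ + B * Kᵀ) * (A₀⁻¹)ᵀ,
        R (H, K)))
    (hinj : Function.Injective J) :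
    ∃ U ∈ nhds (A₀, B),
      ∀ p ∈ U, IsUnit (Prod.fst p).det →
        (Prod.fst p)⁻¹ * (Prod.snd p) * (Prod.snd p)ᵀ * ((Prod.fst p)⁻¹)ᵀ = Sig →
        R p = R (A₀, B) → p = (A₀, B) := by
  have hD : Injective fun x =>
      (covarianceGap Sig (A₀, B) x + covarianceGap Sig x (A₀, B), R x) := by
    refine Injective.of_comp (f := fun y => (-(A₀⁻¹ * y.1 * A₀⁻¹ᵀ), y.2)) ?_
    convert hinj using 1
    funext ⟨H, K⟩
    rw [Function.comp_apply, hJ, neg_conj_covarianceGap_deriv B hA₀]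
  obtain ⟨U, hU, hinjOn⟩ := exists_mem_nhds_injOn_covarianceGap_prod Sig R (A₀, B) hD
  refine ⟨U, hU, fun p hp hdet hcov hres => hinjOn hp (mem_of_mem_nhds hU) ?_⟩
  simp only [covarianceGap_self_eq_zero hdet hcov, covarianceGap_self_eq_zero hA₀ hSig.symm, hres]

/-- Local identifiability of the noise parameters `(A₀, B)` in the
AB-model: if the joint Jacobian map is injective, then `(A₀, B)` is locally the
unique pair with innovation covariance `Σ` satisfying the restrictions. -/
theorem stmt_4 (n q r : ℕ) (hn : 0 < n) (hq : 0 < q) (hr : 0 < r) (hqn : q < n)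
    (A₀ : Matrix (Fin n) (Fin n) ℝ) (hA₀ : IsUnit A₀.det)
    (B : Matrix (Fin n) (Fin q) ℝ) (hB : B.rank = q)
    (Sig : Matrix (Fin n) (Fin n) ℝ) (hSig : Sig = A₀⁻¹ * B * Bᵀ * (A₀⁻¹)ᵀ)
    (R : (Matrix (Fin n) (Fin n) ℝ × Matrix (Fin n) (Fin q) ℝ) →ₗ[ℝ] (Fin r → ℝ))
    (J : (Matrix (Fin n) (Fin n) ℝ × Matrix (Fin n) (Fin q) ℝ) →ₗ[ℝ]
      (Matrix (Fin n) (Fin n) ℝ × (Fin r → ℝ)))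
    (hJ : ∀ H K, J (H, K) =
      (-(A₀⁻¹ * H * Sig) - Sig * Hᵀ * (A₀⁻¹)ᵀ + A₀⁻¹ * (K * Bᵀ + B * Kᵀ) * (A₀⁻¹)ᵀ,
        R (H, K)))
    (hinj : Function.Injective J) :
    ∃ U ∈ nhds (A₀, B),
      ∀ p ∈ U, IsUnit (Prod.fst p).det →
        (Prod.fst p)⁻¹ * (Prod.snd p) * (Prod.snd p)ᵀ * ((Prod.fst p)⁻¹)ᵀ = Sig →
        R p = R (A₀, B) → p = (A₀, B) :=
  stmt_4_general n q r A₀ hA₀ B Sig hSig R J hJ hinj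
end

section
/- Let n, q, r be positive integers with q < n, let B be a real n×q matrix of full column rank, and let R : ℝ^{n×q} → ℝ^r be a linear map. If the linear map K ↦ (B·Kᵀ + K·Bᵀ, R(K)) is injective, then there is a neighborhood U of B in ℝ^{n×q} such that every B̃ ∈ U with B̃B̃ᵀ = BBᵀ and R(B̃) = R(B) satisfies B̃ = B. -/
/-!
The map `X ↦ (X Xᵀ, R X)` has derivative `K ↦ (B Kᵀ + K Bᵀ, R K)` at `B`. An injective linear map
on a finite-dimensional space is antilipschitz, so a map whose derivative at a point is injective
takes its value at that point nowhere else on a punctured neighbourhood of it.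
-/

open Matrix Filter Topology

theorem HasFDerivAt.eventually_eq_imp_eq {𝕜 E F : Type*} [NontriviallyNormedField 𝕜]
    [CompleteSpace 𝕜] [NormedAddCommGroup E] [NormedSpace 𝕜 E] [FiniteDimensional 𝕜 E]
    [NormedAddCommGroup F] [NormedSpace 𝕜 F] {f : E → F} {f' : E →L[𝕜] F} {x : E}
    (hf : HasFDerivAt f f' x) (hf' : Function.Injective f') :
    ∀ᶠ y in 𝓝 x, f y = f x → y = x := by
  obtain ⟨C, -, hC⟩ := f'.toLinearMap.injective_iff_antilipschitz.1 hf'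
  filter_upwards [eventually_nhdsWithin_iff.1 (hf.eventually_ne ⟨C, hC⟩ (c := f x))]
    with y hne hfy
  by_contra hyx
  exact hne hyx hfy

section MatrixCalculus

attribute [local instance] Matrix.normedAddCommGroup Matrix.normedSpace

variable {𝕜 m n : Type*} [NontriviallyNormedField 𝕜] [CompleteSpace 𝕜] [Fintype m] [Fintype n]

variable (𝕜 m n) in
noncomputable def Matrix.mulTransposeCLM :
    Matrix m n 𝕜 →L[𝕜] Matrix m n 𝕜 →L[𝕜] Matrix m m 𝕜 :=
  LinearMap.toContinuousLinearMap <| LinearMap.toContinuousLinearMap.toLinearMap ∘ₗ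
    (mulLinearMap 𝕜).compl₂ (transposeLinearEquiv m n 𝕜 𝕜).toLinearMap

theorem Matrix.hasFDerivAt_mul_transpose_self {B : Matrix m n 𝕜}
    {D : Matrix m n 𝕜 →L[𝕜] Matrix m m 𝕜} (hD : ∀ K, D K = B * Kᵀ + K * Bᵀ) :
    HasFDerivAt (fun X : Matrix m n 𝕜 => X * Xᵀ) D B :=
  ((mulTransposeCLM 𝕜 m n).hasFDerivAt_of_bilinear (hasFDerivAt_id B)
    (hasFDerivAt_id B)).congr_fderiv (ContinuousLinearMap.ext fun K => (hD K).symm)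

theorem Matrix.eventually_eq_of_mul_transpose_self_eq {V : Type*} [NormedAddCommGroup V]
    [NormedSpace 𝕜 V] {B : Matrix m n 𝕜} (R : Matrix m n 𝕜 →ₗ[𝕜] V)
    (J : Matrix m n 𝕜 →ₗ[𝕜] Matrix m m 𝕜 × V) (hJ : ∀ K, J K = (B * Kᵀ + K * Bᵀ, R K))
    (hinj : Function.Injective J) :
    ∀ᶠ X in 𝓝 B, X * Xᵀ = B * Bᵀ → R X = R B → X = B := by
  have hquad : HasFDerivAt (fun X : Matrix m n 𝕜 => X * Xᵀ)
      ((ContinuousLinearMap.fst 𝕜 _ V).comp (LinearMap.toContinuousLinearMap J)) B :=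
    hasFDerivAt_mul_transpose_self fun K => by simp [hJ]
  have hderiv : HasFDerivAt (fun X => (X * Xᵀ, R X)) (LinearMap.toContinuousLinearMap J) B :=
    (hquad.prodMk (LinearMap.toContinuousLinearMap R).hasFDerivAt).congr_fderiv <| by
      refine ContinuousLinearMap.ext fun K => ?_
      change ((J K).1, R K) = J K
      rw [hJ]
  filter_upwards [hderiv.eventually_eq_imp_eq hinj] with X hX hXX hRX
  exact hX (Prod.ext hXX hRX)

end MatrixCalculus

theorem stmt_5_general (n q r : ℕ)
    (B : Matrix (Fin n) (Fin q) ℝ)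
    (R : Matrix (Fin n) (Fin q) ℝ →ₗ[ℝ] (Fin r → ℝ))
    (J : Matrix (Fin n) (Fin q) ℝ →ₗ[ℝ] (Matrix (Fin n) (Fin n) ℝ × (Fin r → ℝ)))
    (hJ : ∀ K, J K = (B * Kᵀ + K * Bᵀ, R K))
    (hinj : Function.Injective J) :
    ∃ U ∈ nhds B, ∀ B' ∈ U, B' * B'ᵀ = B * Bᵀ → R B' = R B → B' = B :=
  (eventually_eq_of_mul_transpose_self_eq R J hJ hinj).exists_mem

/-- Local identifiability of `B` in the SVAR setting with `A₀ = I`: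
if `K ↦ (B·Kᵀ + K·Bᵀ, R(K))` is injective, then `B` is locally the unique matrix
with `B̃B̃ᵀ = BBᵀ` satisfying the restrictions. -/
theorem stmt_5 (n q r : ℕ) (hn : 0 < n) (hq : 0 < q) (hr : 0 < r) (hqn : q < n)
    (B : Matrix (Fin n) (Fin q) ℝ) (hB : B.rank = q)
    (R : Matrix (Fin n) (Fin q) ℝ →ₗ[ℝ] (Fin r → ℝ))
    (J : Matrix (Fin n) (Fin q) ℝ →ₗ[ℝ] (Matrix (Fin n) (Fin n) ℝ × (Fin r → ℝ)))
    (hJ : ∀ K, J K = (B * Kᵀ + K * Bᵀ, R K))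
    (hinj : Function.Injective J) :
    ∃ U ∈ nhds B, ∀ B' ∈ U, B' * B'ᵀ = B * Bᵀ → R B' = R B → B' = B :=
  stmt_5_general n q r B R J hJ hinj
end

section
/- Let n, p, s be positive integers with s ≤ np, and let Γ be a real np×np matrix of rank np − s. Then the set of real (ns)×(n²p) matrices C_S such that the stacked matrix [(I_n ⊗ Γ); C_S] (of size (n²p + ns) × n²p) does not have full column rank n²p has Lebesgue measure zero in the space of (ns)×(n²p) real matrices. Consequently, for every C_S outside this null set and every right-hand side for which the system (I_n ⊗ Γ)x = g, C_S x = 0 has a solution, that solution is unique. -/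
open Matrix MeasureTheory
open scoped Kronecker

open Module

/-! A generic vector `c ∈ ℝ^N` is not orthogonal to a given nonzero subspace `K`: the vectors that
are form the proper subspace `Kᗮ`, a null set. So for a.e. `c` the dimension of `K ⊓ cᗮ` is smaller
than that of `K`, and by Fubini and induction on the number of rows, `m` generic rows cut any
subspace of dimension at most `m` down to `0`. Here `K = ker (I_n ⊗ Γ) ≅ (ker Γ)ⁿ` has dimension
`n (np - rank Γ) ≤ ns`, so for a.e. `C_S` the stacked matrix has trivial kernel, which is both full
column rank and uniqueness of solutions. -/

namespace Matrix

variable {𝕜 : Type*} [Field 𝕜] {m n : Type*} [Fintype n]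

theorem rank_add_finrank_ker (A : Matrix m n 𝕜) :
    A.rank + finrank 𝕜 (LinearMap.ker A.mulVecLin) = Fintype.card n := by
  rw [rank, LinearMap.finrank_range_add_finrank_ker, finrank_fintype_fun_eq_card]

theorem rank_eq_card_iff_ker_eq_bot (A : Matrix m n 𝕜) :
    A.rank = Fintype.card n ↔ LinearMap.ker A.mulVecLin = ⊥ := by
  rw [← Submodule.finrank_eq_zero]
  have := A.rank_add_finrank_ker
  omega

theorem ker_mulVecLin_fromRows {m₁ m₂ : Type*} (A₁ : Matrix m₁ n 𝕜) (A₂ : Matrix m₂ n 𝕜) :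
    LinearMap.ker (fromRows A₁ A₂).mulVecLin =
      LinearMap.ker A₁.mulVecLin ⊓ LinearMap.ker A₂.mulVecLin := by
  ext v
  simp [fromRows_mulVec, funext_iff, Sum.forall]

theorem one_kronecker_mulVec {k l : Type*} [Fintype k] [DecidableEq k] (A : Matrix l n 𝕜)
    (x : k × n → 𝕜) (i : k) (j : l) :
    (((1 : Matrix k k 𝕜) ⊗ₖ A) *ᵥ x) (i, j) = (A *ᵥ fun j' => x (i, j')) j := by
  simp [mulVec, dotProduct, Fintype.sum_prod_type, one_apply, ite_mul]

theorem finrank_ker_one_kronecker_le {k l : Type*} [Fintype k] [DecidableEq k] [Fintype l]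
    (A : Matrix l n 𝕜) :
    finrank 𝕜 (LinearMap.ker ((1 : Matrix k k 𝕜) ⊗ₖ A).mulVecLin) ≤
      Fintype.card k * finrank 𝕜 (LinearMap.ker A.mulVecLin) := by
  have mem_ker_row (x : LinearMap.ker ((1 : Matrix k k 𝕜) ⊗ₖ A).mulVecLin) (i : k) :
      (fun j => (x : k × n → 𝕜) (i, j)) ∈ LinearMap.ker A.mulVecLin := by
    ext j
    rw [mulVecLin_apply, ← one_kronecker_mulVec]
    exact congrFun (LinearMap.mem_ker.mp x.2) (i, j)
  let rows : LinearMap.ker ((1 : Matrix k k 𝕜) ⊗ₖ A).mulVecLin →ₗ[𝕜]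
      (k → LinearMap.ker A.mulVecLin) :=
    { toFun x i := ⟨_, mem_ker_row x i⟩
      map_add' _ _ := rfl
      map_smul' _ _ := rfl }
  have rows_injective : Function.Injective rows := fun x y hxy => by
    ext ⟨i, j⟩
    exact congrFun (congrArg Subtype.val (congrFun hxy i)) j
  simpa [finrank_pi_fintype] using LinearMap.finrank_le_finrank_of_injective rows_injective

end Matrix

section

variable {ι : Type*} [Fintype ι]

theorem ker_mulVecLin_of_cons {R : Type*} [CommRing R] {m : ℕ} (c₀ : ι → R)
    (c : Fin m → ι → R) :
    LinearMap.ker (Matrix.of (Fin.cons c₀ c : Fin (m + 1) → ι → R)).mulVecLin =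
      LinearMap.ker (dotProductBilin R R c₀) ⊓ LinearMap.ker (Matrix.of c).mulVecLin := by
  ext v
  simp [funext_iff, Fin.forall_fin_succ, mulVec]

theorem isClosed_setOf_not_disjoint_ker (K : Submodule ℝ (ι → ℝ)) (m : ℕ) :
    IsClosed {c : Fin m → ι → ℝ | ¬Disjoint K (LinearMap.ker (Matrix.of c).mulVecLin)} := by
  let restrict (c : Fin m → ι → ℝ) : K →L[ℝ] (Fin m → ℝ) :=
    LinearMap.toContinuousLinearMap ((Matrix.of c).mulVecLin.domRestrict K)
  have restrict_continuous : Continuous restrict := continuous_clm_apply.mpr fun v => by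
    simp only [restrict, LinearMap.coe_toContinuousLinearMap', LinearMap.domRestrict_apply,
      mulVecLin_apply]
    fun_prop
  refine isOpen_compl_iff.mp ?_
  simpa [restrict, Set.compl_ofPred] using
    ContinuousLinearMap.isOpen_injective.preimage restrict_continuous

theorem ae_finrank_inf_ker_dotProduct_lt (K : Submodule ℝ (ι → ℝ)) (hK : K ≠ ⊥) :
    ∀ᵐ c : ι → ℝ, finrank ℝ ↥(K ⊓ LinearMap.ker (dotProductBilin ℝ ℝ c)) < finrank ℝ K := by
  have annihilator_ne_top : K.orthogonalBilin (dotProductBilin ℝ ℝ) ≠ ⊤ := by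
    obtain ⟨v, hvK, hv⟩ := Submodule.exists_mem_ne_zero_of_ne_bot hK
    intro h
    have hv_mem : v ∈ K.orthogonalBilin (dotProductBilin ℝ ℝ) := h ▸ Submodule.mem_top
    exact hv (dotProduct_self_eq_zero.mp (Submodule.mem_orthogonalBilin_iff.mp hv_mem v hvK))
  filter_upwards [measure_eq_zero_iff_ae_notMem.mp
    (Measure.addHaar_submodule volume _ annihilator_ne_top)] with c hc
  refine Submodule.finrank_lt_finrank_of_lt (inf_lt_left.mpr fun hle => hc ?_)
  rw [SetLike.mem_coe, Submodule.mem_orthogonalBilin_iff]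
  intro v hv
  simpa [dotProduct_comm] using hle hv

theorem volume_setOf_not_disjoint_ker {m : ℕ} (K : Submodule ℝ (ι → ℝ))
    (hK : finrank ℝ K ≤ m) :
    volume {c : Fin m → ι → ℝ | ¬Disjoint K (LinearMap.ker (Matrix.of c).mulVecLin)} = 0 := by
  induction m generalizing K with
  | zero =>
    rw [Nat.le_zero, Submodule.finrank_eq_zero] at hK
    simp [hK]
  | succ m ih =>
    by_cases hK₀ : K = ⊥
    · simp [hK₀]
    let e := MeasurableEquiv.piFinSuccAbove (fun _ : Fin (m + 1) => ι → ℝ) 0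
    have he : MeasurePreserving e.symm (volume.prod volume) volume :=
      (volume_preserving_piFinSuccAbove (fun _ : Fin (m + 1) => ι → ℝ) 0).symm
    set S := {c : Fin (m + 1) → ι → ℝ | ¬Disjoint K (LinearMap.ker (Matrix.of c).mulVecLin)}
    have hS : MeasurableSet S := (isClosed_setOf_not_disjoint_ker K (m + 1)).measurableSet
    rw [← he.measure_preimage hS.nullMeasurableSet,
      Measure.measure_prod_null (hS.preimage e.symm.measurable)]
    filter_upwards [ae_finrank_inf_ker_dotProduct_lt K hK₀] with c₀ hc₀
    have slice : Prod.mk c₀ ⁻¹' (e.symm ⁻¹' S) = {c | ¬Disjoint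
        (K ⊓ LinearMap.ker (dotProductBilin ℝ ℝ c₀)) (LinearMap.ker (Matrix.of c).mulVecLin)} := by
      ext c
      have : e.symm (c₀, c) = Fin.cons c₀ c := by
        simp only [e, MeasurableEquiv.piFinSuccAbove_symm_apply, Fin.insertNthEquiv_zero]
        exact funext (Fin.consEquiv_apply _ _)
      simp [S, this, ker_mulVecLin_of_cons, disjoint_assoc]
    rw [Pi.zero_apply, slice]
    exact ih _ (by omega)

end

theorem stmt_11_general (n p s : ℕ)
    (Γ : Matrix (Fin (n * p)) (Fin (n * p)) ℝ) (hΓ : Γ.rank = n * p - s) :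
    volume {C : Fin (n * s) → (Fin n × Fin (n * p)) → ℝ |
      (Matrix.fromRows ((1 : Matrix (Fin n) (Fin n) ℝ) ⊗ₖ Γ) (Matrix.of C)).rank
        ≠ n ^ 2 * p} = 0 ∧
    ∀ C : Fin (n * s) → (Fin n × Fin (n * p)) → ℝ,
      (Matrix.fromRows ((1 : Matrix (Fin n) (Fin n) ℝ) ⊗ₖ Γ) (Matrix.of C)).rank
        = n ^ 2 * p →
      ∀ (g x y : (Fin n × Fin (n * p)) → ℝ),
        ((1 : Matrix (Fin n) (Fin n) ℝ) ⊗ₖ Γ).mulVec x = g →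
        (Matrix.of C).mulVec x = 0 →
        ((1 : Matrix (Fin n) (Fin n) ℝ) ⊗ₖ Γ).mulVec y = g →
        (Matrix.of C).mulVec y = 0 →
        x = y := by
  set M := (1 : Matrix (Fin n) (Fin n) ℝ) ⊗ₖ Γ
  have finrank_ker_le : finrank ℝ (LinearMap.ker M.mulVecLin) ≤ n * s := by
    have rank_nullity := Γ.rank_add_finrank_ker
    have kronecker_le := finrank_ker_one_kronecker_le (k := Fin n) Γ
    rw [Fintype.card_fin] at rank_nullity kronecker_le
    exact kronecker_le.trans (Nat.mul_le_mul_left n (by omega))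
  have full_rank_iff (C : Fin (n * s) → (Fin n × Fin (n * p)) → ℝ) :
      (fromRows M (of C)).rank = n ^ 2 * p ↔
        Disjoint (LinearMap.ker M.mulVecLin) (LinearMap.ker (of C).mulVecLin) := by
    rw [show n ^ 2 * p = Fintype.card (Fin n × Fin (n * p)) by simp; ring,
      rank_eq_card_iff_ker_eq_bot, ker_mulVecLin_fromRows, disjoint_iff]
  refine ⟨?_, fun C hC g x y hx hCx hy hCy => ?_⟩
  · simpa only [ne_eq, full_rank_iff] using volume_setOf_not_disjoint_ker _ finrank_ker_le
  · refine sub_eq_zero.mp (Submodule.disjoint_def.mp ((full_rank_iff C).mp hC) (x - y) ?_ ?_)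
    · simp [mulVec_sub, hx, hy]
    · simp [mulVec_sub, hCx, hCy]

/-- For `Γ` of size `np×np` and rank `np − s`, the set of
`(ns)×(n²p)` restriction matrices `C_S` (identified with Euclidean space with
Lebesgue measure) for which the stacked matrix `[(I_n ⊗ Γ); C_S]` fails to have
full column rank `n²p` is a Lebesgue null set; for every `C_S` outside it, the
system `(I_n ⊗ Γ)x = g, C_S x = 0` has at most one solution. -/
theorem stmt_11 (n p s : ℕ) (hn : 0 < n) (hp : 0 < p) (hs : 0 < s)
    (hsnp : s ≤ n * p)
    (Γ : Matrix (Fin (n * p)) (Fin (n * p)) ℝ) (hΓ : Γ.rank = n * p - s) :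
    volume {C : Fin (n * s) → (Fin n × Fin (n * p)) → ℝ |
      (Matrix.fromRows ((1 : Matrix (Fin n) (Fin n) ℝ) ⊗ₖ Γ) (Matrix.of C)).rank
        ≠ n ^ 2 * p} = 0 ∧
    ∀ C : Fin (n * s) → (Fin n × Fin (n * p)) → ℝ,
      (Matrix.fromRows ((1 : Matrix (Fin n) (Fin n) ℝ) ⊗ₖ Γ) (Matrix.of C)).rank
        = n ^ 2 * p →
      ∀ (g x y : (Fin n × Fin (n * p)) → ℝ),
        ((1 : Matrix (Fin n) (Fin n) ℝ) ⊗ₖ Γ).mulVec x = g →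
        (Matrix.of C).mulVec x = 0 →
        ((1 : Matrix (Fin n) (Fin n) ℝ) ⊗ₖ Γ).mulVec y = g →
        (Matrix.of C).mulVec y = 0 →
        x = y :=
  stmt_11_general n p s Γ hΓ
end

section
/- For all real numbers κ and τ, let B be the real 3×2 matrix with rows (1, 0), (−κτ, 1), (−τ, 0). If K is a real 3×2 matrix satisfying B·Kᵀ + K·Bᵀ = 0 together with K₁₁ = 0, K₁₂ = 0, K₂₂ = 0, and K₃₂ = 0, then K = 0. -/
open Matrix

/-- For the impact matrix `B` of the New-Keynesian DSGE model,
any `K` with `B·Kᵀ + K·Bᵀ = 0` and `K₁₁ = K₁₂ = K₂₂ = K₃₂ = 0` is zero. -/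
theorem stmt_16 (κ τ : ℝ)
    (B : Matrix (Fin 3) (Fin 2) ℝ) (hB : B = !![1, 0; -κ * τ, 1; -τ, 0])
    (K : Matrix (Fin 3) (Fin 2) ℝ)
    (hK : B * Kᵀ + K * Bᵀ = 0)
    (h11 : K 0 0 = 0) (h12 : K 0 1 = 0) (h22 : K 1 1 = 0) (h32 : K 2 1 = 0) :
    K = 0 := by
  subst hB
  have h1 := congrFun (congrFun hK 0) 1
  have h2 := congrFun (congrFun hK 0) 2
  simp [Matrix.mul_apply, Matrix.vecMul, dotProduct, Fin.sum_univ_succ, Matrix.add_apply, h11, h12, h22, h32] at h1 h2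
  ext i j
  fin_cases i <;> fin_cases j <;>
    simp [h11, h12, h22, h32, h1, h2]
end
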